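/- Under the conditions: (a) logical operators Z̄_l and Z̄_r come from separate codeblocks with distances d_l and d_r, (b') let D = max(|Z̄_l|, |Z̄_r|) and assume w.l.o.g. |Z̄_l| ≥ |Z̄_r|, and the (non-injective) port function f is such that im f is a set of D vertices connected one-to-one to supp(Z̄_l), with a subset of it connected one-to-one to supp(Z̄_r); then for any nontrivial logical Λ̄ of the combined code commuting with but not equivalent to Z̄_l·Z̄_r, and any vertex check subset v, the weight |Λ̄·H_Z(v)| restricted to the original code qubits is at least d_l + d_r − D. If moreover |Z̄_l| = d_l (condition (b)), this lower bound equals min(d_l, d_r). -/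

import Mathlib

open Matrix Finset

/-- Indicator vector of a finset. -/
def indic {n : ℕ} (L : Finset (Fin n)) : Fin n → ZMod 2 :=
  fun q => if q ∈ L then 1 else 0

/-- A Pauli `(px, pz)` is a stabilizer of the code with checks `[H_X | H_Z]`. -/
def IsStab {rX rZ n : ℕ} (HX : Matrix (Fin rX) (Fin n) (ZMod 2))
    (HZ : Matrix (Fin rZ) (Fin n) (ZMod 2)) (px pz : Fin n → ZMod 2) : Prop :=
  ∃ (cx : Fin rX → ZMod 2) (cz : Fin rZ → ZMod 2),
    px = Matrix.vecMul cx HX ∧ pz = Matrix.vecMul cz HZ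

/-- Weight of a Pauli with `X`-part `px` and `Z`-part `pz`. -/
def pWeight {n : ℕ} (px pz : Fin n → ZMod 2) : ℕ :=
  (Finset.univ.filter fun q => px q ≠ 0 ∨ pz q ≠ 0).card

/-- The `Z`-support that the selected vertex checks `v` add on the original qubits. -/
def portSupport {n : ℕ} {W : Type*} (L : Finset (Fin n))
    (f : {q : Fin n // q ∈ L} ↪ W) (v : W → ZMod 2) : Fin n → ZMod 2 :=
  fun q => if h : q ∈ L then v (f ⟨q, h⟩) else 0

/-- Every element of `ZMod 2` is `0` or `1`. -/
lemma zmod2_cases : ∀ x : ZMod 2, x = 0 ∨ x = 1 := by decide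

lemma zmod2_add_self (x : ZMod 2) : x + x = 0 := by
  rcases zmod2_cases x with h | h <;> simp [h] <;> decide

lemma zmod2_add_one_ne_zero (x : ZMod 2) : x + 1 ≠ 0 ↔ x = 0 := by
  rcases zmod2_cases x with h | h <;> simp [h] <;> decide

/-- Weight changes by at most the support of the added `Z`-vector. -/
lemma pWeight_le_add {n : ℕ} (px pz s : Fin n → ZMod 2) :
    pWeight px pz ≤ pWeight px (pz + s) +
      (Finset.univ.filter fun q => s q ≠ 0).card := by
  unfold pWeight
  refine le_trans (Finset.card_le_card ?_) (Finset.card_union_le _ _)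
  intro q hq
  simp only [Finset.mem_filter, Finset.mem_union, Finset.mem_univ, true_and,
    Pi.add_apply] at *
  rcases hq with h | h
  · exact Or.inl (Or.inl h)
  · by_cases hs : s q = 0
    · exact Or.inl (Or.inr (by rw [hs, add_zero]; exact h))
    · exact Or.inr hs

lemma stab_diff {rX rZ n : ℕ} (HX : Matrix (Fin rX) (Fin n) (ZMod 2))
    (HZ : Matrix (Fin rZ) (Fin n) (ZMod 2)) (px pz w : Fin n → ZMod 2)
    (h1 : IsStab HX HZ px pz) (h2 : IsStab HX HZ px (pz + w)) :
    IsStab HX HZ 0 w := by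
  obtain ⟨cx, cz, hx, hz⟩ := h1
  obtain ⟨cx', cz', hx', hz'⟩ := h2
  refine ⟨cx + cx', cz + cz', ?_, ?_⟩
  · rw [Matrix.add_vecMul, ← hx, ← hx']
    funext q; exact (zmod2_add_self _).symm
  · rw [Matrix.add_vecMul, ← hz, ← hz']
    funext q
    simp only [Pi.add_apply, Pi.zero_apply]
    rcases zmod2_cases (pz q) with h | h <;>
      rcases zmod2_cases (w q) with h' | h' <;> simp [h, h'] <;> decide

lemma portFilter {n : ℕ} {W : Type*} (L : Finset (Fin n))
    (f : {q : Fin n // q ∈ L} ↪ W) (v : W → ZMod 2) :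
    (Finset.univ.filter fun q : Fin n => portSupport L f v q ≠ 0) =
      (Finset.univ.filter fun q : {q : Fin n // q ∈ L} => v (f q) ≠ 0).map
        (Function.Embedding.subtype _) := by
  ext q
  simp only [Finset.mem_filter, Finset.mem_univ, true_and, Finset.mem_map,
    Function.Embedding.coe_subtype, portSupport]
  constructor
  · intro h
    by_cases hq : q ∈ L
    · exact ⟨⟨q, hq⟩, by simpa [hq] using h, rfl⟩
    · simp [hq] at h
  · rintro ⟨⟨p, hp⟩, hne, rfl⟩
    simpa [hp] using hne

lemma portFilter0 {n : ℕ} {W : Type*} (L : Finset (Fin n))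
    (f : {q : Fin n // q ∈ L} ↪ W) (v : W → ZMod 2) :
    (Finset.univ.filter fun q : Fin n => (portSupport L f v + indic L) q ≠ 0) =
      (Finset.univ.filter fun q : {q : Fin n // q ∈ L} => v (f q) = 0).map
        (Function.Embedding.subtype _) := by
  ext q
  rw [Finset.mem_filter]
  simp only [Finset.mem_filter, Finset.mem_univ, true_and, Finset.mem_map,
    Function.Embedding.coe_subtype, portSupport, indic, Pi.add_apply]
  constructor
  · intro h
    by_cases hq : q ∈ L
    · simp only [hq, dif_pos, if_pos] at h
      exact ⟨⟨q, hq⟩, by simpa using (zmod2_add_one_ne_zero _).1 h, rfl⟩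
    · simp [hq] at h
  · rintro ⟨⟨p, hp⟩, h0, rfl⟩
    simp [hp, h0]

/-- **expansionless joint measurement.** Two separate CSS LDPC codeblocks
(`left` with distance `d_l`, `right` with distance `d_r`) are merged via one auxiliary
graph whose port is connected one-to-one to `supp Z̄_l` and, through a subset of the same
port vertices, one-to-one to `supp Z̄_r` (so the right port is contained in the left
port).  For `D = max(|Z̄_l|, |Z̄_r|) = |Z̄_l|` (w.l.o.g. `|Z̄_l| ≥ |Z̄_r|`) and any
nontrivial logical `Λ̄ = Λ̄_l Λ̄_r` of the combined code commuting with `Z̄_l Z̄_r` but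
not equivalent to it, and any vertex-check subset `v`, the weight of `Λ̄·H_Z(v)` on the
original-code qubits is at least `d_l + d_r − D`; if moreover `|Z̄_l| = d_l`, it is at
least `min(d_l, d_r)`. -/
theorem joint_measurement_without_expansion
    {rXl rZl rXr rZr nl nr dl dr : ℕ} {W : Type*} [Fintype W]
    (HXl : Matrix (Fin rXl) (Fin nl) (ZMod 2)) (HZl : Matrix (Fin rZl) (Fin nl) (ZMod 2))
    (HXr : Matrix (Fin rXr) (Fin nr) (ZMod 2)) (HZr : Matrix (Fin rZr) (Fin nr) (ZMod 2))
    (hcssl : HXl * HZl.transpose = 0) (hcssr : HXr * HZr.transpose = 0)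
    -- distances of the two codes
    (hdl : ∀ px pz : Fin nl → ZMod 2,
      HXl.mulVec pz = 0 → HZl.mulVec px = 0 → ¬ IsStab HXl HZl px pz → dl ≤ pWeight px pz)
    (hdr : ∀ px pz : Fin nr → ZMod 2,
      HXr.mulVec pz = 0 → HZr.mulVec px = 0 → ¬ IsStab HXr HZr px pz → dr ≤ pWeight px pz)
    -- the measured logicals Z̄_l = Z(Ll), Z̄_r = Z(Lr), both nontrivial
    (Ll : Finset (Fin nl)) (Lr : Finset (Fin nr))
    (hZl : HXl.mulVec (indic Ll) = 0) (hZr : HXr.mulVec (indic Lr) = 0)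
    (hZlnt : ¬ IsStab HXl HZl 0 (indic Ll)) (hZrnt : ¬ IsStab HXr HZr 0 (indic Lr))
    -- condition (b'): |Z̄_l| ≥ |Z̄_r|
    (hsize : Lr.card ≤ Ll.card)
    -- port functions: left injective onto its image, right port contained in left port
    (fl : {q : Fin nl // q ∈ Ll} ↪ W) (fr : {q : Fin nr // q ∈ Lr} ↪ W)
    (hports : ∀ q : {q : Fin nr // q ∈ Lr}, fr q ∈ Finset.univ.map fl)
    -- Λ̄ = Λ̄_l Λ̄_r: a logical of the combined code
    (lxl lzl : Fin nl → ZMod 2) (lxr lzr : Fin nr → ZMod 2)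
    (hcomml : HXl.mulVec lzl = 0) (hcomml' : HZl.mulVec lxl = 0)
    (hcommr : HXr.mulVec lzr = 0) (hcommr' : HZr.mulVec lxr = 0)
    -- Λ̄ commutes with Z̄_l Z̄_r
    (hcommZ : lxl ⬝ᵥ indic Ll + lxr ⬝ᵥ indic Lr = 0)
    -- Λ̄ is nontrivial and not equivalent to Z̄_l Z̄_r
    (hnt : ¬ (IsStab HXl HZl lxl lzl ∧ IsStab HXr HZr lxr lzr))
    (hntZ : ¬ (IsStab HXl HZl lxl (lzl + indic Ll) ∧ IsStab HXr HZr lxr (lzr + indic Lr)))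
    (v : W → ZMod 2) :
    dl + dr - Ll.card ≤
        pWeight lxl (lzl + portSupport Ll fl v) + pWeight lxr (lzr + portSupport Lr fr v) ∧
      (Ll.card = dl →
        min dl dr ≤
          pWeight lxl (lzl + portSupport Ll fl v) +
            pWeight lxr (lzr + portSupport Lr fr v)) := by
  classical
  -- subtype-level counting sets
  set A1 : Finset {q : Fin nl // q ∈ Ll} :=
    Finset.univ.filter (fun q => v (fl q) ≠ 0) with hA1
  set A0 : Finset {q : Fin nl // q ∈ Ll} :=
    Finset.univ.filter (fun q => v (fl q) = 0) with hA0
  set B1 : Finset {q : Fin nr // q ∈ Lr} :=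
    Finset.univ.filter (fun q => v (fr q) ≠ 0) with hB1
  set B0 : Finset {q : Fin nr // q ∈ Lr} :=
    Finset.univ.filter (fun q => v (fr q) = 0) with hB0
  have hAcard : A1.card + A0.card = Ll.card := by
    have h := Finset.card_filter_add_card_filter_not
      (s := (Finset.univ : Finset {q : Fin nl // q ∈ Ll}))
      (p := fun q => v (fl q) ≠ 0)
    rw [Finset.card_univ, Fintype.card_coe] at h
    simpa [hA1, hA0, not_not] using h
  have hBcard : B1.card + B0.card = Lr.card := by
    have h := Finset.card_filter_add_card_filter_not
      (s := (Finset.univ : Finset {q : Fin nr // q ∈ Lr}))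
      (p := fun q => v (fr q) ≠ 0)
    rw [Finset.card_univ, Fintype.card_coe] at h
    simpa [hB1, hB0, not_not] using h
  -- the map from the right port into the left port
  have hgex : ∀ q : {q : Fin nr // q ∈ Lr}, ∃ p, fl p = fr q := by
    intro q; simpa using hports q
  choose g hgeq using hgex
  have hginj : Function.Injective g := by
    intro a b h
    apply fr.injective
    rw [← hgeq, ← hgeq, h]
  -- (i) A1.card + B0.card ≤ Ll.card
  have hi : A1.card + B0.card ≤ Ll.card := by
    have hdisj : Disjoint A1 (B0.image g) := by
      rw [Finset.disjoint_left]
      intro p hp hp'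
      rw [hA1, Finset.mem_filter] at hp
      rw [Finset.mem_image] at hp'
      obtain ⟨q, hq0, rfl⟩ := hp'
      rw [hB0, Finset.mem_filter] at hq0
      exact hp.2 (by rw [hgeq]; exact hq0.2)
    calc A1.card + B0.card
        = (A1 ∪ B0.image g).card := by
          rw [Finset.card_union_of_disjoint hdisj,
            Finset.card_image_of_injective _ hginj]
      _ ≤ (Finset.univ : Finset {q : Fin nl // q ∈ Ll}).card :=
          Finset.card_le_card (Finset.subset_univ _)
      _ = Ll.card := by rw [Finset.card_univ, Fintype.card_coe]
  -- (ii) B1.card ≤ A1.card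
  have hii : B1.card ≤ A1.card := by
    have hsub : B1.image g ⊆ A1 := by
      intro p hp
      rw [Finset.mem_image] at hp
      obtain ⟨q, hq, rfl⟩ := hp
      rw [hB1, Finset.mem_filter] at hq
      rw [hA1, Finset.mem_filter]
      exact ⟨Finset.mem_univ _, by rw [hgeq]; exact hq.2⟩
    calc B1.card = (B1.image g).card :=
          (Finset.card_image_of_injective _ hginj).symm
      _ ≤ A1.card := Finset.card_le_card hsub
  -- weight bounds
  set Wl := pWeight lxl (lzl + portSupport Ll fl v) with hWl
  set Wr := pWeight lxr (lzr + portSupport Lr fr v) with hWr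
  have hboundl1 : ¬ IsStab HXl HZl lxl lzl → dl ≤ Wl + A1.card := by
    intro hS
    have h := pWeight_le_add lxl lzl (portSupport Ll fl v)
    rw [portFilter, Finset.card_map] at h
    exact le_trans (hdl lxl lzl hcomml hcomml' hS) h
  have hboundl0 : ¬ IsStab HXl HZl lxl (lzl + indic Ll) → dl ≤ Wl + A0.card := by
    intro hS
    have h := pWeight_le_add lxl (lzl + indic Ll) (portSupport Ll fl v + indic Ll)
    have heq : lzl + indic Ll + (portSupport Ll fl v + indic Ll)
        = lzl + portSupport Ll fl v := by
      funext q
      simp only [Pi.add_apply]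
      have : ∀ a i s : ZMod 2, a + i + (s + i) = a + s := by decide
      exact this _ _ _
    rw [heq, portFilter0, Finset.card_map] at h
    have hmv : HXl.mulVec (lzl + indic Ll) = 0 := by
      rw [Matrix.mulVec_add, hcomml, hZl, add_zero]
    exact le_trans (hdl lxl (lzl + indic Ll) hmv hcomml' hS) h
  have hboundr1 : ¬ IsStab HXr HZr lxr lzr → dr ≤ Wr + B1.card := by
    intro hS
    have h := pWeight_le_add lxr lzr (portSupport Lr fr v)
    rw [portFilter, Finset.card_map] at h
    exact le_trans (hdr lxr lzr hcommr hcommr' hS) h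
  have hboundr0 : ¬ IsStab HXr HZr lxr (lzr + indic Lr) → dr ≤ Wr + B0.card := by
    intro hS
    have h := pWeight_le_add lxr (lzr + indic Lr) (portSupport Lr fr v + indic Lr)
    have heq : lzr + indic Lr + (portSupport Lr fr v + indic Lr)
        = lzr + portSupport Lr fr v := by
      funext q
      simp only [Pi.add_apply]
      have : ∀ a i s : ZMod 2, a + i + (s + i) = a + s := by decide
      exact this _ _ _
    rw [heq, portFilter0, Finset.card_map] at h
    have hmv : HXr.mulVec (lzr + indic Lr) = 0 := by
      rw [Matrix.mulVec_add, hcommr, hZr, add_zero]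
    exact le_trans (hdr lxr (lzr + indic Lr) hmv hcommr' hS) h
  -- the case split on nontriviality
  have hnSl : ¬ (IsStab HXl HZl lxl lzl ∧ IsStab HXl HZl lxl (lzl + indic Ll)) :=
    fun ⟨h1, h2⟩ => hZlnt (stab_diff HXl HZl lxl lzl (indic Ll) h1 h2)
  have hnSr : ¬ (IsStab HXr HZr lxr lzr ∧ IsStab HXr HZr lxr (lzr + indic Lr)) :=
    fun ⟨h1, h2⟩ => hZrnt (stab_diff HXr HZr lxr lzr (indic Lr) h1 h2)
  have hcases : (¬ IsStab HXl HZl lxl lzl ∧ ¬ IsStab HXr HZr lxr (lzr + indic Lr)) ∨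
      (¬ IsStab HXl HZl lxl (lzl + indic Ll) ∧ ¬ IsStab HXr HZr lxr lzr) := by
    by_cases hSl : IsStab HXl HZl lxl lzl
    · exact Or.inr ⟨fun h => hnSl ⟨hSl, h⟩, fun h => hnt ⟨hSl, h⟩⟩
    · by_cases hSr' : IsStab HXr HZr lxr (lzr + indic Lr)
      · exact Or.inr ⟨fun h => hntZ ⟨h, hSr'⟩, fun h => hnSr ⟨h, hSr'⟩⟩
      · exact Or.inl ⟨hSl, hSr'⟩
  rcases hcases with ⟨hSl, hSr⟩ | ⟨hSl, hSr⟩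
  · have h1 := hboundl1 hSl
    have h2 := hboundr0 hSr
    exact ⟨by omega, fun hc => le_trans (min_le_right dl dr) (by omega)⟩
  · have h1 := hboundl0 hSl
    have h2 := hboundr1 hSr
    have : A0.card + B1.card ≤ Ll.card := by omega
    exact ⟨by omega, fun hc => le_trans (min_le_right dl dr) (by omega)⟩
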